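/- If δ > 0 is small enough, then the function F₁ is convex on ℝ, is even, and satisfies F₁(s) ≥ 0 for all s ∈ ℝ. -/

import Mathlib

open Real Set

/-!
We have `F₁ δ s = radialProfile δ |s|`, where `radialProfile δ` follows
`t ↦ -½ t² log t²` up to `δ` and continues by its second-order Taylor polynomial at `δ`.
The two branches therefore glue to a `C¹` function whose derivative is nondecreasing as long
as the second derivative `-log t² - 3` is nonnegative on `(0, δ]`, i.e. `log δ² ≤ -3`;
the derivative is then also nonnegative. A convex function that is nondecreasing on `[0, ∞)`
composed with `|·|` is convex, and it is even and bounded below by its value `0` at `0`.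
-/

theorem hasDerivAt_ite_lt {p q : ℝ → ℝ} {a d : ℝ} (hp : HasDerivAt p d a)
    (hq : HasDerivAt q d a) (hpq : p a = q a) :
    HasDerivAt (fun t => if t < a then p t else q t) d a := by
  have hleft : HasDerivWithinAt (fun t => if t < a then p t else q t) d (Iic a) a := by
    refine hp.hasDerivWithinAt.congr (fun t ht => ?_) (by simp [hpq])
    rcases (mem_Iic.mp ht).lt_or_eq with h | rfl
    · simp [h]
    · simp [hpq]
  have hright : HasDerivWithinAt (fun t => if t < a then p t else q t) d (Ici a) a :=
    hq.hasDerivWithinAt.congr (fun t ht => by simp [not_lt.mpr (mem_Ici.mp ht)]) (by simp)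
  exact (hleft.union hright).hasDerivAt (by simp [Iic_union_Ici])

theorem ConvexOn.comp_norm {E : Type*} [SeminormedAddCommGroup E] [NormedSpace ℝ E] {g : ℝ → ℝ}
    (hconv : ConvexOn ℝ (Ici 0) g) (hmono : MonotoneOn g (Ici 0)) :
    ConvexOn ℝ univ fun x : E => g ‖x‖ := by
  refine ⟨convex_univ, fun x _ y _ a b ha hb hab => ?_⟩
  calc g ‖a • x + b • y‖ ≤ g (a • ‖x‖ + b • ‖y‖) :=
        hmono (norm_nonneg _) (by simp only [mem_Ici, smul_eq_mul]; positivity)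
          (convexOn_univ_norm.2 trivial trivial ha hb hab)
    _ ≤ a • g ‖x‖ + b • g ‖y‖ := hconv.2 (norm_nonneg x) (norm_nonneg y) ha hb hab

noncomputable def logBranch (t : ℝ) : ℝ := negMulLog (t ^ 2) / 2

noncomputable def logBranchDeriv (t : ℝ) : ℝ := -t * log (t ^ 2) - t

noncomputable def quadBranch (δ t : ℝ) : ℝ :=
  -(1/2) * t ^ 2 * (log (δ ^ 2) + 3) + 2 * δ * t - (1/2) * δ ^ 2

noncomputable def quadBranchDeriv (δ t : ℝ) : ℝ := -t * (log (δ ^ 2) + 3) + 2 * δ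

noncomputable def radialProfile (δ t : ℝ) : ℝ := if t < δ then logBranch t else quadBranch δ t

noncomputable def radialProfileDeriv (δ t : ℝ) : ℝ :=
  if t < δ then logBranchDeriv t else quadBranchDeriv δ t

theorem continuous_logBranch : Continuous logBranch :=
  (continuous_negMulLog.comp (continuous_pow 2)).div_const 2

theorem hasDerivAt_logBranch {t : ℝ} (ht : t ≠ 0) :
    HasDerivAt logBranch (logBranchDeriv t) t := by
  have hsq : HasDerivAt (fun t : ℝ => t ^ 2) (2 * t) t := by simpa using hasDerivAt_pow 2 t
  have h := ((hasDerivAt_negMulLog (pow_ne_zero 2 ht)).comp (h := fun t : ℝ => t ^ 2) t hsq).div_const 2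
  exact h.congr_deriv (by simp only [logBranchDeriv]; ring)

theorem hasDerivAt_logBranchDeriv {t : ℝ} (ht : t ≠ 0) :
    HasDerivAt logBranchDeriv (-log (t ^ 2) - 3) t := by
  have hsq : HasDerivAt (fun t : ℝ => t ^ 2) (2 * t) t := by simpa using hasDerivAt_pow 2 t
  have h := ((hasDerivAt_id t).neg.mul (hsq.log (pow_ne_zero 2 ht))).sub (hasDerivAt_id t)
  exact h.congr_deriv (by simp only [Pi.neg_apply, id]; field_simp; ring)

theorem hasDerivAt_quadBranch (δ t : ℝ) : HasDerivAt (quadBranch δ) (quadBranchDeriv δ t) t := by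
  have hsq : HasDerivAt (fun t : ℝ => t ^ 2) (2 * t) t := by simpa using hasDerivAt_pow 2 t
  have h := (((hsq.const_mul (-(1/2))).mul_const (log (δ ^ 2) + 3)).add
    ((hasDerivAt_id t).const_mul (2 * δ))).sub_const ((1/2) * δ ^ 2)
  exact h.congr_deriv (by simp only [quadBranchDeriv]; ring)

theorem hasDerivAt_radialProfile {δ t : ℝ} (ht : t ≠ 0) :
    HasDerivAt (radialProfile δ) (radialProfileDeriv δ t) t := by
  rcases lt_trichotomy t δ with h | rfl | h
  · rw [radialProfileDeriv, if_pos h]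
    exact (hasDerivAt_logBranch ht).congr_of_eventuallyEq
      ((eventually_lt_nhds h).mono fun u hu => if_pos hu)
  · rw [radialProfileDeriv, if_neg (lt_irrefl t)]
    refine hasDerivAt_ite_lt ((hasDerivAt_logBranch ht).congr_deriv ?_)
      (hasDerivAt_quadBranch t t) ?_
    · simp only [logBranchDeriv, quadBranchDeriv]
      ring
    · simp only [logBranch, quadBranch, negMulLog]
      ring
  · rw [radialProfileDeriv, if_neg (not_lt.mpr h.le)]
    exact (hasDerivAt_quadBranch δ t).congr_of_eventuallyEq
      ((eventually_gt_nhds h).mono fun u hu => if_neg (not_lt.mpr hu.le))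

theorem continuousOn_radialProfile {δ : ℝ} (hδ : 0 < δ) :
    ContinuousOn (radialProfile δ) (Ici 0) := by
  intro t ht
  rcases (mem_Ici.mp ht).eq_or_lt with rfl | ht
  · exact (continuous_logBranch.continuousAt.congr
      ((eventually_lt_nhds hδ).mono fun u hu => (if_pos hu).symm)).continuousWithinAt
  · exact (hasDerivAt_radialProfile ht.ne').continuousAt.continuousWithinAt

theorem radialProfile_zero {δ : ℝ} (hδ : 0 < δ) : radialProfile δ 0 = 0 := by
  simp [radialProfile, hδ, logBranch]

theorem log_sq_le_log_sq {δ t : ℝ} (ht : 0 < t) (htδ : t < δ) : log (t ^ 2) ≤ log (δ ^ 2) :=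
  log_le_log (by positivity) (pow_le_pow_left₀ ht.le htδ.le 2)

theorem monotoneOn_radialProfileDeriv {δ : ℝ} (hδ : 0 < δ) (hδ3 : log (δ ^ 2) ≤ -3) :
    MonotoneOn (radialProfileDeriv δ) (Ioi 0) := by
  have hlog : MonotoneOn logBranchDeriv (Ioc 0 δ) := by
    refine monotoneOn_of_hasDerivWithinAt_nonneg (convex_Ioc 0 δ)
      (fun t ht => (hasDerivAt_logBranchDeriv ht.1.ne').continuousAt.continuousWithinAt)
      (fun t ht => (hasDerivAt_logBranchDeriv ?_).hasDerivWithinAt) fun t ht => ?_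
    · rw [interior_Ioc] at ht
      exact ht.1.ne'
    · rw [interior_Ioc] at ht
      linarith [log_sq_le_log_sq ht.1 ht.2]
  have hquad : MonotoneOn (quadBranchDeriv δ) (Ici δ) := fun a _ b _ hab => by
    simp only [quadBranchDeriv]
    nlinarith
  rw [← Ioc_union_Ici_eq_Ioi hδ]
  refine MonotoneOn.union_right (hlog.congr fun t ht => ?_) (hquad.congr fun t ht => ?_)
    ⟨right_mem_Ioc.2 hδ, fun _ h => h.2⟩ ⟨self_mem_Ici, fun _ h => h⟩
  · rcases ht.2.lt_or_eq with h | rfl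
    · simp [radialProfileDeriv, h]
    · simp only [radialProfileDeriv, lt_irrefl, if_false, logBranchDeriv, quadBranchDeriv]
      ring
  · simp [radialProfileDeriv, not_lt.mpr (mem_Ici.mp ht)]

theorem radialProfileDeriv_nonneg {δ t : ℝ} (hδ : 0 < δ) (hδ3 : log (δ ^ 2) ≤ -3) (ht : 0 < t) :
    0 ≤ radialProfileDeriv δ t := by
  rw [radialProfileDeriv]
  split_ifs with htδ
  · have := log_sq_le_log_sq ht htδ
    simp only [logBranchDeriv]
    nlinarith
  · simp only [quadBranchDeriv]
    nlinarith

theorem convexOn_radialProfile {δ : ℝ} (hδ : 0 < δ) (hδ3 : log (δ ^ 2) ≤ -3) :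
    ConvexOn ℝ (Ici 0) (radialProfile δ) := by
  refine MonotoneOn.convexOn_of_deriv (convex_Ici 0) (continuousOn_radialProfile hδ) ?_ ?_
  · rw [interior_Ici]
    exact fun t ht => (hasDerivAt_radialProfile (ne_of_gt ht)).differentiableAt.differentiableWithinAt
  · rw [interior_Ici]
    exact (monotoneOn_radialProfileDeriv hδ hδ3).congr fun t ht =>
      (hasDerivAt_radialProfile (ne_of_gt ht)).deriv.symm

theorem monotoneOn_radialProfile {δ : ℝ} (hδ : 0 < δ) (hδ3 : log (δ ^ 2) ≤ -3) :
    MonotoneOn (radialProfile δ) (Ici 0) := by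
  refine monotoneOn_of_hasDerivWithinAt_nonneg (convex_Ici 0) (continuousOn_radialProfile hδ)
    (fun t ht => (hasDerivAt_radialProfile ?_).hasDerivWithinAt) fun t ht => ?_
  · rw [interior_Ici] at ht
    exact ne_of_gt ht
  · rw [interior_Ici] at ht
    exact radialProfileDeriv_nonneg hδ hδ3 ht

theorem F1_convex_even_nonneg (F₁ : ℝ → ℝ → ℝ)
    (hF₁ : ∀ δ : ℝ, 0 < δ → ∀ s : ℝ, F₁ δ s =
      if s = 0 then 0
      else if |s| < δ then -(1/2) * s^2 * Real.log (s^2)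
      else -(1/2) * s^2 * (Real.log (δ^2) + 3) + 2*δ*|s| - (1/2)*δ^2) :
    ∃ δ₀ > 0, ∀ δ : ℝ, 0 < δ → δ < δ₀ →
      ConvexOn ℝ Set.univ (F₁ δ) ∧ (∀ s : ℝ, F₁ δ (-s) = F₁ δ s) ∧
      (∀ s : ℝ, 0 ≤ F₁ δ s) := by
  refine ⟨exp (-(3/2)), exp_pos _, fun δ hδ hδδ₀ => ?_⟩
  have hδ3 : log (δ ^ 2) ≤ -3 := by
    have := (log_lt_iff_lt_exp hδ).2 hδδ₀
    rw [log_pow]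
    push_cast
    linarith
  have hF : F₁ δ = fun s => radialProfile δ ‖s‖ := by
    funext s
    rw [hF₁ δ hδ s, Real.norm_eq_abs]
    rcases eq_or_ne s 0 with rfl | hs
    · simp [radialProfile_zero hδ]
    · simp only [if_neg hs, radialProfile, logBranch, quadBranch, negMulLog, sq_abs]
      split_ifs <;> ring
  rw [hF]
  refine ⟨(convexOn_radialProfile hδ hδ3).comp_norm (monotoneOn_radialProfile hδ hδ3),
    fun s => by simp only [norm_neg], fun s => ?_⟩
  simpa [radialProfile_zero hδ] using
    monotoneOn_radialProfile hδ hδ3 self_mem_Ici (norm_nonneg s) (norm_nonneg s)
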